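/- Let g^L = g^R − 2 V ⊗ V be a Lorentzian metric built from a Riemannian metric g^R and a one-form V with g_R-norm 1 (g_R^{μν} V_μ V_ν = 1) on a smooth manifold. Let ξ be a vector field such that the Lie derivative L_ξ V = α V for some smooth function α. Then L_ξ g^L = 0 if and only if L_ξ g^R = 0 and L_ξ V = 0. -/

import Mathlib

open scoped BigOperators

/-- Partial derivative `∂_μ F` at `x` of a scalar function on ℝⁿ. -/
noncomputable def pdK {n : ℕ} (F : (Fin n → ℝ) → ℝ) (x : Fin n → ℝ) (μ : Fin n) : ℝ :=
  fderiv ℝ F x (Pi.single μ 1)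

/-- Lie derivative of a (0,2)-tensor field (metric) along a vector field `ξ` on ℝⁿ:
`(L_ξ g)_{μν} = ξ^ρ ∂_ρ g_{μν} + g_{ρν} ∂_μ ξ^ρ + g_{μρ} ∂_ν ξ^ρ`. -/
noncomputable def lieMetric {n : ℕ} (ξ : (Fin n → ℝ) → (Fin n → ℝ))
    (g : (Fin n → ℝ) → Matrix (Fin n) (Fin n) ℝ) (x : Fin n → ℝ) :
    Matrix (Fin n) (Fin n) ℝ :=
  Matrix.of fun μ ν =>
    (∑ ρ, ξ x ρ * pdK (fun y => g y μ ν) x ρ)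
      + (∑ ρ, g x ρ ν * pdK (fun y => ξ y ρ) x μ)
      + (∑ ρ, g x μ ρ * pdK (fun y => ξ y ρ) x ν)

/-- Lie derivative of a covector field `V` along `ξ`:
`(L_ξ V)_μ = ξ^ρ ∂_ρ V_μ + V_ρ ∂_μ ξ^ρ`. -/
noncomputable def lieCovector {n : ℕ} (ξ V : (Fin n → ℝ) → (Fin n → ℝ))
    (x : Fin n → ℝ) (μ : Fin n) : ℝ :=
  (∑ ρ, ξ x ρ * pdK (fun y => V y μ) x ρ) + (∑ ρ, V x ρ * pdK (fun y => ξ y ρ) x μ)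

section helpers
variable {n : ℕ}

lemma pdK_const (c : ℝ) (x : Fin n → ℝ) (μ : Fin n) : pdK (fun _ => c) x μ = 0 := by
  simp [pdK]

lemma pdK_sub {f g : (Fin n → ℝ) → ℝ} {x : Fin n → ℝ} (hf : DifferentiableAt ℝ f x)
    (hg : DifferentiableAt ℝ g x) (μ : Fin n) :
    pdK (fun y => f y - g y) x μ = pdK f x μ - pdK g x μ := by
  unfold pdK; rw [fderiv_fun_sub hf hg]; simp

lemma pdK_mul {f g : (Fin n → ℝ) → ℝ} {x : Fin n → ℝ} (hf : DifferentiableAt ℝ f x)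
    (hg : DifferentiableAt ℝ g x) (μ : Fin n) :
    pdK (fun y => f y * g y) x μ = f x * pdK g x μ + g x * pdK f x μ := by
  unfold pdK; rw [fderiv_fun_mul hf hg]; simp

lemma pdK_const_mul {f : (Fin n → ℝ) → ℝ} {x : Fin n → ℝ} (hf : DifferentiableAt ℝ f x)
    (c : ℝ) (μ : Fin n) :
    pdK (fun y => c * f y) x μ = c * pdK f x μ := by
  unfold pdK; rw [fderiv_const_mul hf c]; simp

lemma pdK_sum {ι : Type*} {s : Finset ι} {f : ι → (Fin n → ℝ) → ℝ} {x : Fin n → ℝ}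
    (hf : ∀ i ∈ s, DifferentiableAt ℝ (f i) x) (μ : Fin n) :
    pdK (fun y => ∑ i ∈ s, f i y) x μ = ∑ i ∈ s, pdK (f i) x μ := by
  unfold pdK; rw [fderiv_fun_sum hf]; simp

lemma contDiff_finset_prod {ι : Type*} (s : Finset ι) (f : ι → (Fin n → ℝ) → ℝ)
    (hf : ∀ i, ContDiff ℝ (⊤ : ℕ∞) (f i)) : ContDiff ℝ (⊤ : ℕ∞) fun x => ∏ i ∈ s, f i x := by
  classical
  induction s using Finset.induction_on with
  | empty => simpa using contDiff_const
  | insert _ _ h ih =>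
    simp only [Finset.prod_insert h]
    exact (hf _).mul ih

lemma contDiff_det {m : ℕ} {M : (Fin n → ℝ) → Matrix (Fin m) (Fin m) ℝ}
    (hM : ∀ i j, ContDiff ℝ (⊤ : ℕ∞) fun x => M x i j) : ContDiff ℝ (⊤ : ℕ∞) fun x => (M x).det := by
  have h : (fun x => (M x).det)
      = fun x => ∑ σ : Equiv.Perm (Fin m), ((Equiv.Perm.sign σ : ℤ) : ℝ) * ∏ i, M x (σ i) i := by
    funext x
    simp [Matrix.det_apply, Units.smul_def, zsmul_eq_mul]
  rw [h]
  exact ContDiff.sum fun σ _ =>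
    contDiff_const.mul (contDiff_finset_prod _ _ fun i => hM (σ i) i)

lemma triple_swap {f : Fin n → Fin n → Fin n → ℝ} :
    ∑ μ, ∑ ν, ∑ ρ, f μ ν ρ = ∑ ρ, ∑ μ, ∑ ν, f μ ν ρ :=
  calc ∑ μ, ∑ ν, ∑ ρ, f μ ν ρ
      = ∑ μ, ∑ ρ, ∑ ν, f μ ν ρ :=
        Finset.sum_congr rfl fun _ _ => Finset.sum_comm
    _ = ∑ ρ, ∑ μ, ∑ ν, f μ ν ρ := Finset.sum_comm

lemma diff_inv_entry {gR : (Fin n → ℝ) → Matrix (Fin n) (Fin n) ℝ}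
    (hgR : ∀ μ ν, ContDiff ℝ (⊤ : ℕ∞) (fun x => gR x μ ν))
    (hinvertible : ∀ x, IsUnit (gR x).det) (μ ν : Fin n) :
    Differentiable ℝ (fun y => (gR y)⁻¹ μ ν) := by
  classical
  have hdet : ContDiff ℝ (⊤ : ℕ∞) fun y => (gR y).det := contDiff_det hgR
  have hadj : ContDiff ℝ (⊤ : ℕ∞) fun y => (gR y).adjugate μ ν := by
    have h : (fun y => (gR y).adjugate μ ν)
        = fun y => ((gR y).updateRow ν (Pi.single μ 1)).det := by
      funext y; rw [Matrix.adjugate_apply]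
    rw [h]
    refine contDiff_det fun i j => ?_
    by_cases hiν : i = ν
    · simp only [Matrix.updateRow_apply, hiν, if_pos rfl]
      exact contDiff_const
    · simp only [Matrix.updateRow_apply, if_neg hiν]
      exact hgR i j
  have h : (fun y => (gR y)⁻¹ μ ν)
      = fun y => ((gR y).det)⁻¹ * (gR y).adjugate μ ν := by
    funext y
    rw [Matrix.inv_def]
    simp [Ring.inverse_eq_inv', Matrix.smul_apply, smul_eq_mul]
  rw [h]
  intro x
  exact ((hdet.differentiable (by simp) x).inv
    (isUnit_iff_ne_zero.mp (hinvertible x))).mul (hadj.differentiable (by simp) x)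

end helpers

/-- Theorem 6 of the paper (in coordinates on ℝⁿ): if `g^L = g^R − 2 V ⊗ V` with `V` a
nowhere-vanishing covector field of unit `g^R`-norm (`g_R^{μν} V_μ V_ν = 1`), and `ξ` is a
vector field with `L_ξ V = α V` for a smooth function `α`, then `L_ξ g^L = 0` iff
`L_ξ g^R = 0` and `L_ξ V = 0`. -/
theorem stmt6 {n : ℕ}
    (ξ V : (Fin n → ℝ) → (Fin n → ℝ))
    (gR : (Fin n → ℝ) → Matrix (Fin n) (Fin n) ℝ)
    (hξ : ContDiff ℝ (⊤ : ℕ∞) ξ) (hV : ContDiff ℝ (⊤ : ℕ∞) V)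
    (hgR : ∀ μ ν, ContDiff ℝ (⊤ : ℕ∞) (fun x => gR x μ ν))
    (hsymm : ∀ x, Matrix.transpose (gR x) = gR x)
    (hinvertible : ∀ x, IsUnit (gR x).det)
    (hVnz : ∀ x, V x ≠ 0)
    (hunit : ∀ x, ∑ μ, ∑ ν, (gR x)⁻¹ μ ν * V x μ * V x ν = 1)
    (α : (Fin n → ℝ) → ℝ) (hα : ContDiff ℝ (⊤ : ℕ∞) α)
    (hLV : ∀ x μ, lieCovector ξ V x μ = α x * V x μ)
    (gL : (Fin n → ℝ) → Matrix (Fin n) (Fin n) ℝ)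
    (hgL : ∀ x, gL x = Matrix.of fun μ ν => gR x μ ν - 2 * V x μ * V x ν) :
    (∀ x, lieMetric ξ gL x = 0) ↔
      ((∀ x, lieMetric ξ gR x = 0) ∧ (∀ x μ, lieCovector ξ V x μ = 0)) := by
  classical
  have dV : ∀ μ, Differentiable ℝ fun y => V y μ :=
    differentiable_pi.mp (hV.differentiable (by simp))
  have dξ : ∀ μ, Differentiable ℝ fun y => ξ y μ :=
    differentiable_pi.mp (hξ.differentiable (by simp))
  have dg : ∀ μ ν, Differentiable ℝ fun y => gR y μ ν :=
    fun μ ν => (hgR μ ν).differentiable (by simp)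
  have dginv : ∀ μ ν, Differentiable ℝ fun y => (gR y)⁻¹ μ ν :=
    fun μ ν => diff_inv_entry hgR hinvertible μ ν
  set W : (Fin n → ℝ) → Fin n → ℝ := fun y μ => ∑ ν, (gR y)⁻¹ μ ν * V y ν with hWdef
  have dW : ∀ μ, Differentiable ℝ fun y => W y μ :=
    fun μ => Differentiable.fun_sum fun ν _ => (dginv μ ν).mul (dV ν)
  have hsym' : ∀ y μ ν, gR y μ ν = gR y ν μ := by
    intro y μ ν
    conv_lhs => rw [← hsymm y]
    rw [Matrix.transpose_apply]
  -- g W = V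
  have hF1 : ∀ y μ, ∑ ν, gR y μ ν * W y ν = V y μ := by
    intro y μ
    calc ∑ ν, gR y μ ν * W y ν
        = ∑ ν, ∑ σ, gR y μ ν * ((gR y)⁻¹ ν σ * V y σ) := by
          refine Finset.sum_congr rfl fun ν _ => ?_
          rw [hWdef, Finset.mul_sum]
      _ = ∑ σ, (∑ ν, gR y μ ν * (gR y)⁻¹ ν σ) * V y σ := by
          rw [Finset.sum_comm]
          refine Finset.sum_congr rfl fun σ _ => ?_
          rw [Finset.sum_mul]
          exact Finset.sum_congr rfl fun ν _ => by ring
      _ = ∑ σ, (gR y * (gR y)⁻¹) μ σ * V y σ := by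
          refine Finset.sum_congr rfl fun σ _ => ?_
          rw [Matrix.mul_apply]
      _ = V y μ := by
          rw [Matrix.mul_nonsing_inv _ (hinvertible y)]
          simp [Matrix.one_apply]
  -- W g = V
  have hF3 : ∀ y ν, ∑ μ, W y μ * gR y μ ν = V y ν := by
    intro y ν
    rw [← hF1 y ν]
    refine Finset.sum_congr rfl fun μ _ => ?_
    rw [hsym' y μ ν]; ring
  -- V · W = 1
  have hF2 : ∀ y, ∑ ν, V y ν * W y ν = 1 := by
    intro y
    rw [← hunit y]
    refine Finset.sum_congr rfl fun ν _ => ?_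
    rw [hWdef, Finset.mul_sum]
    exact Finset.sum_congr rfl fun σ _ => by ring
  have hWV : ∀ y, ∑ μ, W y μ * V y μ = 1 := by
    intro y
    rw [← hF2 y]
    exact Finset.sum_congr rfl fun μ _ => mul_comm _ _
  -- decomposition of lieMetric gL
  have hL1 : ∀ x μ ν, lieMetric ξ gL x μ ν = lieMetric ξ gR x μ ν
      - 2*(V x ν * lieCovector ξ V x μ + V x μ * lieCovector ξ V x ν) := by
    intro x μ ν
    have hgLfun : ∀ μ ν : Fin n, (fun y => gL y μ ν) = fun y => gR y μ ν - (2 * V y μ) * V y ν := by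
      intro μ ν; funext y; rw [hgL y]; simp only [Matrix.of_apply]
    have hpd : ∀ ρ, pdK (fun y => gL y μ ν) x ρ
        = pdK (fun y => gR y μ ν) x ρ
          - 2*(V x ν * pdK (fun y => V y μ) x ρ + V x μ * pdK (fun y => V y ν) x ρ) := by
      intro ρ
      rw [hgLfun μ ν,
        pdK_sub (dg μ ν x) ((((dV μ).const_mul 2).fun_mul (dV ν)) x) ρ,
        pdK_mul (((dV μ).const_mul 2) x) (dV ν x) ρ,
        pdK_const_mul (dV μ x) 2 ρ]
      ring
    have hgLx : ∀ ρ σ : Fin n, gL x ρ σ = gR x ρ σ - 2 * V x ρ * V x σ := by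
      intro ρ σ; rw [hgL x]; rfl
    simp only [lieMetric, lieCovector, Matrix.of_apply]
    have e1 : ∑ ρ, ξ x ρ * pdK (fun y => gL y μ ν) x ρ
        = (∑ ρ, ξ x ρ * pdK (fun y => gR y μ ν) x ρ)
          - 2*V x ν*(∑ ρ, ξ x ρ * pdK (fun y => V y μ) x ρ)
          - 2*V x μ*(∑ ρ, ξ x ρ * pdK (fun y => V y ν) x ρ) := by
      rw [Finset.mul_sum, Finset.mul_sum, ← Finset.sum_sub_distrib, ← Finset.sum_sub_distrib]
      refine Finset.sum_congr rfl fun ρ _ => ?_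
      rw [hpd ρ]; ring
    have e2 : ∑ ρ, gL x ρ ν * pdK (fun y => ξ y ρ) x μ
        = (∑ ρ, gR x ρ ν * pdK (fun y => ξ y ρ) x μ)
          - 2*V x ν*(∑ ρ, V x ρ * pdK (fun y => ξ y ρ) x μ) := by
      rw [Finset.mul_sum, ← Finset.sum_sub_distrib]
      refine Finset.sum_congr rfl fun ρ _ => ?_
      rw [hgLx ρ ν]; ring
    have e3 : ∑ ρ, gL x μ ρ * pdK (fun y => ξ y ρ) x ν
        = (∑ ρ, gR x μ ρ * pdK (fun y => ξ y ρ) x ν)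
          - 2*V x μ*(∑ ρ, V x ρ * pdK (fun y => ξ y ρ) x ν) := by
      rw [Finset.mul_sum, ← Finset.sum_sub_distrib]
      refine Finset.sum_congr rfl fun ρ _ => ?_
      rw [hgLx μ ρ]; ring
    rw [e1, e2, e3]; ring
  -- key: if L_ξ gR = 4 α V⊗V at x then α x = 0
  have halpha : ∀ x, (∀ μ ν, lieMetric ξ gR x μ ν = 4 * α x * V x μ * V x ν) → α x = 0 := by
    intro x hA
    set S : Fin n → ℝ := fun ρ => ∑ μ, W x μ * pdK (fun y => V y μ) x ρ with hSdef
    have hD1 : ∀ μ ρ, pdK (fun y => V y μ) x ρ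
        = (∑ ν, gR x μ ν * pdK (fun y => W y ν) x ρ)
          + (∑ ν, W x ν * pdK (fun y => gR y μ ν) x ρ) := by
      intro μ ρ
      have hfun : (fun y => V y μ) = fun y => ∑ ν, gR y μ ν * W y ν :=
        funext fun y => (hF1 y μ).symm
      rw [hfun, pdK_sum (f := fun ν y => gR y μ ν * W y ν)
        (fun ν _ => ((dg μ ν).mul (dW ν)) x) ρ, ← Finset.sum_add_distrib]
      exact Finset.sum_congr rfl fun ν _ => pdK_mul (dg μ ν x) (dW ν x) ρ
    have hD2 : ∀ ρ, (∑ ν, V x ν * pdK (fun y => W y ν) x ρ) = - S ρ := by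
      intro ρ
      have h0 : pdK (fun _ : Fin n → ℝ => (1:ℝ)) x ρ = 0 := pdK_const 1 x ρ
      have hfun : (fun _ : Fin n → ℝ => (1:ℝ)) = fun y => ∑ ν, V y ν * W y ν :=
        funext fun y => (hF2 y).symm
      rw [hfun, pdK_sum (f := fun ν y => V y ν * W y ν)
        (fun ν _ => ((dV ν).mul (dW ν)) x) ρ] at h0
      have h0' : ∑ ν, (V x ν * pdK (fun y => W y ν) x ρ + W x ν * pdK (fun y => V y ν) x ρ) = 0 := by
        rw [← h0]
        exact Finset.sum_congr rfl fun ν _ => (pdK_mul (dV ν x) (dW ν x) ρ).symm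
      rw [Finset.sum_add_distrib] at h0'
      simp only [hSdef]
      linarith
    have hK : ∀ ρ, ∑ μ, ∑ ν, W x μ * W x ν * pdK (fun y => gR y μ ν) x ρ = 2 * S ρ := by
      intro ρ
      have step : ∀ μ, ∑ ν, W x μ * W x ν * pdK (fun y => gR y μ ν) x ρ
          = W x μ * pdK (fun y => V y μ) x ρ
            - ∑ ν, W x μ * (gR x μ ν * pdK (fun y => W y ν) x ρ) := by
        intro μ
        have h1 : ∑ ν, W x μ * W x ν * pdK (fun y => gR y μ ν) x ρ
            = W x μ * ∑ ν, W x ν * pdK (fun y => gR y μ ν) x ρ := by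
          rw [Finset.mul_sum]
          exact Finset.sum_congr rfl fun ν _ => by ring
        have h2 : ∑ ν, W x ν * pdK (fun y => gR y μ ν) x ρ
            = pdK (fun y => V y μ) x ρ - ∑ ν, gR x μ ν * pdK (fun y => W y ν) x ρ := by
          rw [hD1 μ ρ]; ring
        rw [h1, h2, mul_sub, Finset.mul_sum]
      calc ∑ μ, ∑ ν, W x μ * W x ν * pdK (fun y => gR y μ ν) x ρ
          = (∑ μ, W x μ * pdK (fun y => V y μ) x ρ)
            - ∑ μ, ∑ ν, W x μ * (gR x μ ν * pdK (fun y => W y ν) x ρ) := by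
            rw [← Finset.sum_sub_distrib]
            exact Finset.sum_congr rfl fun μ _ => step μ
        _ = S ρ - ∑ ν, (∑ μ, W x μ * gR x μ ν) * pdK (fun y => W y ν) x ρ := by
            congr 1
            rw [Finset.sum_comm]
            refine Finset.sum_congr rfl fun ν _ => ?_
            rw [Finset.sum_mul]
            exact Finset.sum_congr rfl fun μ _ => by ring
        _ = S ρ - ∑ ν, V x ν * pdK (fun y => W y ν) x ρ := by
            congr 1
            exact Finset.sum_congr rfl fun ν _ => by rw [hF3 x ν]
        _ = 2 * S ρ := by rw [hD2 ρ]; ring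
    set T : ℝ := ∑ ρ, ξ x ρ * S ρ with hTdef
    have hLV' : ∀ μ, ∑ ρ, V x ρ * pdK (fun y => ξ y ρ) x μ
        = α x * V x μ - ∑ ρ, ξ x ρ * pdK (fun y => V y μ) x ρ := by
      intro μ
      have h := hLV x μ
      simp only [lieCovector] at h
      linarith
    -- term A
    have hTA : ∑ μ, ∑ ν, W x μ * W x ν * (∑ ρ, ξ x ρ * pdK (fun y => gR y μ ν) x ρ) = 2*T := by
      calc ∑ μ, ∑ ν, W x μ * W x ν * (∑ ρ, ξ x ρ * pdK (fun y => gR y μ ν) x ρ)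
          = ∑ μ, ∑ ν, ∑ ρ, W x μ * W x ν * (ξ x ρ * pdK (fun y => gR y μ ν) x ρ) := by
            refine Finset.sum_congr rfl fun μ _ => Finset.sum_congr rfl fun ν _ => ?_
            rw [Finset.mul_sum]
        _ = ∑ ρ, ∑ μ, ∑ ν, W x μ * W x ν * (ξ x ρ * pdK (fun y => gR y μ ν) x ρ) := triple_swap
        _ = ∑ ρ, ξ x ρ * (∑ μ, ∑ ν, W x μ * W x ν * pdK (fun y => gR y μ ν) x ρ) := by
            refine Finset.sum_congr rfl fun ρ _ => ?_
            rw [Finset.mul_sum]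
            refine Finset.sum_congr rfl fun μ _ => ?_
            rw [Finset.mul_sum]
            exact Finset.sum_congr rfl fun ν _ => by ring
        _ = ∑ ρ, ξ x ρ * (2 * S ρ) := by
            exact Finset.sum_congr rfl fun ρ _ => by rw [hK ρ]
        _ = 2*T := by
            rw [hTdef, Finset.mul_sum]
            exact Finset.sum_congr rfl fun ρ _ => by ring
    -- term B
    have hTB : ∑ μ, ∑ ν, W x μ * W x ν * (∑ ρ, gR x ρ ν * pdK (fun y => ξ y ρ) x μ)
        = α x - T := by
      have inner : ∀ μ, ∑ ν, W x μ * W x ν * (∑ ρ, gR x ρ ν * pdK (fun y => ξ y ρ) x μ)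
          = W x μ * (α x * V x μ) - W x μ * (∑ ρ, ξ x ρ * pdK (fun y => V y μ) x ρ) := by
        intro μ
        have h1 : ∑ ν, W x ν * (∑ ρ, gR x ρ ν * pdK (fun y => ξ y ρ) x μ)
            = ∑ ρ, V x ρ * pdK (fun y => ξ y ρ) x μ := by
          calc ∑ ν, W x ν * (∑ ρ, gR x ρ ν * pdK (fun y => ξ y ρ) x μ)
              = ∑ ν, ∑ ρ, W x ν * (gR x ρ ν * pdK (fun y => ξ y ρ) x μ) := by
                refine Finset.sum_congr rfl fun ν _ => ?_
                rw [Finset.mul_sum]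
            _ = ∑ ρ, ∑ ν, W x ν * (gR x ρ ν * pdK (fun y => ξ y ρ) x μ) := Finset.sum_comm
            _ = ∑ ρ, (∑ ν, W x ν * gR x ν ρ) * pdK (fun y => ξ y ρ) x μ := by
                refine Finset.sum_congr rfl fun ρ _ => ?_
                rw [Finset.sum_mul]
                refine Finset.sum_congr rfl fun ν _ => ?_
                rw [hsym' x ρ ν]; ring
            _ = ∑ ρ, V x ρ * pdK (fun y => ξ y ρ) x μ := by
                exact Finset.sum_congr rfl fun ρ _ => by rw [hF3 x ρ]
        calc ∑ ν, W x μ * W x ν * (∑ ρ, gR x ρ ν * pdK (fun y => ξ y ρ) x μ)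
            = W x μ * ∑ ν, W x ν * (∑ ρ, gR x ρ ν * pdK (fun y => ξ y ρ) x μ) := by
              rw [Finset.mul_sum]
              exact Finset.sum_congr rfl fun ν _ => by ring
          _ = W x μ * (α x * V x μ - ∑ ρ, ξ x ρ * pdK (fun y => V y μ) x ρ) := by
              rw [h1, hLV' μ]
          _ = _ := by ring
      calc ∑ μ, ∑ ν, W x μ * W x ν * (∑ ρ, gR x ρ ν * pdK (fun y => ξ y ρ) x μ)
          = (∑ μ, W x μ * (α x * V x μ))
            - ∑ μ, W x μ * (∑ ρ, ξ x ρ * pdK (fun y => V y μ) x ρ) := by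
            rw [← Finset.sum_sub_distrib]
            exact Finset.sum_congr rfl fun μ _ => inner μ
        _ = α x - T := by
            have hfirst : ∑ μ, W x μ * (α x * V x μ) = α x := by
              have h' : ∑ μ, W x μ * (α x * V x μ) = α x * ∑ μ, W x μ * V x μ := by
                rw [Finset.mul_sum]
                exact Finset.sum_congr rfl fun μ _ => by ring
              rw [h', hWV x, mul_one]
            have hsecond : ∑ μ, W x μ * (∑ ρ, ξ x ρ * pdK (fun y => V y μ) x ρ) = T := by
              calc ∑ μ, W x μ * (∑ ρ, ξ x ρ * pdK (fun y => V y μ) x ρ)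
                  = ∑ μ, ∑ ρ, W x μ * (ξ x ρ * pdK (fun y => V y μ) x ρ) := by
                    refine Finset.sum_congr rfl fun μ _ => ?_
                    rw [Finset.mul_sum]
                _ = ∑ ρ, ∑ μ, W x μ * (ξ x ρ * pdK (fun y => V y μ) x ρ) := Finset.sum_comm
                _ = ∑ ρ, ξ x ρ * S ρ := by
                    refine Finset.sum_congr rfl fun ρ _ => ?_
                    rw [hSdef, Finset.mul_sum]
                    exact Finset.sum_congr rfl fun μ _ => by ring
                _ = T := by rw [hTdef]
            rw [hfirst, hsecond]
    -- term C
    have hTC : ∑ μ, ∑ ν, W x μ * W x ν * (∑ ρ, gR x μ ρ * pdK (fun y => ξ y ρ) x ν)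
        = α x - T := by
      calc ∑ μ, ∑ ν, W x μ * W x ν * (∑ ρ, gR x μ ρ * pdK (fun y => ξ y ρ) x ν)
          = ∑ ν, ∑ μ, W x ν * W x μ * (∑ ρ, gR x ρ μ * pdK (fun y => ξ y ρ) x ν) := by
            rw [Finset.sum_comm]
            refine Finset.sum_congr rfl fun ν _ => Finset.sum_congr rfl fun μ _ => ?_
            have h : (∑ ρ, gR x μ ρ * pdK (fun y => ξ y ρ) x ν)
                = ∑ ρ, gR x ρ μ * pdK (fun y => ξ y ρ) x ν :=
              Finset.sum_congr rfl fun ρ _ => by rw [hsym' x μ ρ]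
            rw [h]; ring
        _ = α x - T := hTB
    -- contract lieMetric gR with W ⊗ W, two ways
    have hC1 : ∑ μ, ∑ ν, W x μ * W x ν * lieMetric ξ gR x μ ν = 2*T + (α x - T) + (α x - T) := by
      calc ∑ μ, ∑ ν, W x μ * W x ν * lieMetric ξ gR x μ ν
          = ∑ μ, ∑ ν, (W x μ * W x ν * (∑ ρ, ξ x ρ * pdK (fun y => gR y μ ν) x ρ)
              + W x μ * W x ν * (∑ ρ, gR x ρ ν * pdK (fun y => ξ y ρ) x μ)
              + W x μ * W x ν * (∑ ρ, gR x μ ρ * pdK (fun y => ξ y ρ) x ν)) := by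
            refine Finset.sum_congr rfl fun μ _ => Finset.sum_congr rfl fun ν _ => ?_
            simp only [lieMetric, Matrix.of_apply]
            ring
        _ = 2*T + (α x - T) + (α x - T) := by
            simp only [Finset.sum_add_distrib]
            rw [hTA, hTB, hTC]
    have hC2 : ∑ μ, ∑ ν, W x μ * W x ν * lieMetric ξ gR x μ ν = 4 * α x := by
      calc ∑ μ, ∑ ν, W x μ * W x ν * lieMetric ξ gR x μ ν
          = ∑ μ, (W x μ * V x μ) * (4 * α x * ∑ ν, W x ν * V x ν) := by
            refine Finset.sum_congr rfl fun μ _ => ?_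
            rw [Finset.mul_sum, Finset.mul_sum]
            refine Finset.sum_congr rfl fun ν _ => ?_
            rw [hA μ ν]; ring
        _ = (∑ μ, W x μ * V x μ) * (4 * α x * ∑ ν, W x ν * V x ν) := by
            rw [Finset.sum_mul]
        _ = 4 * α x := by simp only [hWV x]; ring
    rw [hC2] at hC1
    linarith
  constructor
  · intro H
    have hzero : ∀ x, α x = 0 := by
      intro x
      apply halpha x
      intro μ ν
      have h := hL1 x μ ν
      have h0 : lieMetric ξ gL x μ ν = 0 := by rw [H x]; simp
      rw [h0, hLV x μ, hLV x ν] at h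
      have h2 : lieMetric ξ gR x μ ν
          = 2*(V x ν * (α x * V x μ) + V x μ * (α x * V x ν)) := by linarith
      rw [h2]; ring
    constructor
    · intro x
      ext μ ν
      have h := hL1 x μ ν
      have h0 : lieMetric ξ gL x μ ν = 0 := by rw [H x]; simp
      rw [h0, hLV x μ, hLV x ν, hzero x] at h
      simp only [Matrix.zero_apply]
      simp at h
      linarith
    · intro x μ
      rw [hLV x μ, hzero x, zero_mul]
  · rintro ⟨h1, h2⟩ x
    ext μ ν
    have hz : lieMetric ξ gR x μ ν = 0 := by rw [h1 x]; simp
    rw [hL1 x μ ν, h2 x μ, h2 x ν, hz]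
    simp
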